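/- arXiv:math/0301364 — 6 statements merged into one kernel-verified Lean document; each statement's English description precedes it below -/
import Mathlib

section
/- Let A be a commutative algebra and I ⊆ A an ideal. Define Γ(I) = {X : A → A/I linear : X(ab) = X(a)π(b) + π(a)X(b)} where π : A → A/I is the quotient map, and Γ(I)_0 = {Y ∈ Γ(I) : Y(I) = 0}. Then the operation [U, s] = ρ(U) ∘ s − s ∘ U for U ∈ Der_I(A), s ∈ Γ(I) maps Γ(I)_0 into itself, and the induced operation on V(I) = Γ(I)/Γ(I)_0 satisfies [aU, v] = π(a)·[U, v] and [U, k·v] = ρ(U)(k)·v + k·[U, v] for all a ∈ A, k ∈ A/I, U ∈ Der_I(A), v ∈ V(I). -/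
/-- `Γ(I)`: `K`-linear maps `A → A/I` that are derivations over the quotient map `π`. -/
def IsGammaMap {K A : Type*} [Field K] [CommRing A] [Algebra K A] (I : Ideal A)
    (s : A →ₗ[K] A ⧸ I) : Prop :=
  ∀ a b : A, s (a * b) = s a * Ideal.Quotient.mk I b + Ideal.Quotient.mk I a * s b

/-- `Γ(I)₀`: elements of `Γ(I)` vanishing on `I`. -/
def VanishesOn {K A : Type*} [Field K] [CommRing A] [Algebra K A] (I : Ideal A)
    (s : A →ₗ[K] A ⧸ I) : Prop :=
  ∀ a ∈ I, s a = 0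

/-- The bracket `[U, s] = ρ(U) ∘ s − s ∘ U`, where `ρU` is the map on `A/I` induced by `U`. -/
def gammaBracket {K A : Type*} [Field K] [CommRing A] [Algebra K A] (I : Ideal A)
    (U : Derivation K A A) (ρU : (A ⧸ I) →ₗ[K] A ⧸ I) (s : A →ₗ[K] A ⧸ I) :
    A →ₗ[K] A ⧸ I :=
  ρU ∘ₗ s - s ∘ₗ U.toLinearMap

/-- The operation `[U, s] = ρ(U)∘s − s∘U` (for `U ∈ Der_I(A)`, `s ∈ Γ(I)`)
preserves `Γ(I)` and maps `Γ(I)₀` into itself, and the induced operation on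
`V(I) = Γ(I)/Γ(I)₀` satisfies `[aU, v] = π(a)·[U, v]` and
`[U, k·v] = ρ(U)(k)·v + k·[U, v]` (equality in `V(I)` being equality of values on `I`...
two elements of `Γ(I)` are equal in `V(I)` iff their difference vanishes on `I`). -/
theorem stmt1 (K : Type*) [Field K] (A : Type*) [CommRing A] [Algebra K A] (I : Ideal A)
    (U : Derivation K A A) (hU : ∀ a ∈ I, U a ∈ I)
    (ρU : (A ⧸ I) →ₗ[K] A ⧸ I)
    (hρU : ∀ a : A, ρU (Ideal.Quotient.mk I a) = Ideal.Quotient.mk I (U a)) :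
    -- the bracket preserves `Γ(I)`
    (∀ s : A →ₗ[K] A ⧸ I, IsGammaMap I s → IsGammaMap I (gammaBracket I U ρU s)) ∧
    -- the bracket maps `Γ(I)₀` into itself
    (∀ s : A →ₗ[K] A ⧸ I, IsGammaMap I s → VanishesOn I s →
      VanishesOn I (gammaBracket I U ρU s)) ∧
    -- `[aU, v] = π(a)·[U, v]` in `V(I)`
    (∀ (a : A) (ρaU : (A ⧸ I) →ₗ[K] A ⧸ I),
      (∀ x : A, ρaU (Ideal.Quotient.mk I x) = Ideal.Quotient.mk I ((a • U) x)) →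
      ∀ s : A →ₗ[K] A ⧸ I, IsGammaMap I s →
      ∀ x ∈ I, gammaBracket I (a • U) ρaU s x
        = Ideal.Quotient.mk I a * gammaBracket I U ρU s x) ∧
    -- `[U, k·v] = ρ(U)(k)·v + k·[U, v]` in `V(I)`, for `k = π(b)`
    (∀ (b : A) (s : A →ₗ[K] A ⧸ I), IsGammaMap I s →
      ∀ x ∈ I, gammaBracket I U ρU ((LinearMap.mulLeft K (Ideal.Quotient.mk I b)) ∘ₗ s) x
        = Ideal.Quotient.mk I (U b) * s x
          + Ideal.Quotient.mk I b * gammaBracket I U ρU s x) := by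

  have hb : ∀ (s : A →ₗ[K] A ⧸ I) (x : A),
      gammaBracket I U ρU s x = ρU (s x) - s (U x) := fun s x => rfl
  have key : ∀ (k : A ⧸ I) (b : A),
      ρU (k * Ideal.Quotient.mk I b) = ρU k * Ideal.Quotient.mk I b + k * Ideal.Quotient.mk I (U b) := by
    intro k b
    obtain ⟨c, rfl⟩ := Ideal.Quotient.mk_surjective k
    rw [← map_mul, hρU, hρU, U.leibniz, smul_eq_mul, smul_eq_mul, map_add, map_mul, map_mul]
    ring
  refine ⟨?_, ?_, ?_, ?_⟩
  · intro s hs a b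
    have hb1 : gammaBracket I U ρU s (a * b) = ρU (s (a * b)) - s (U (a * b)) := rfl
    rw [hb1, hb, hb, hs a b, map_add, key, mul_comm (Ideal.Quotient.mk I a) (s b), key,
      U.leibniz, smul_eq_mul, smul_eq_mul, map_add,
      hs a (U b), hs b (U a)]
    ring
  · intro s hs hs0 x hx
    rw [hb, hs0 x hx, hs0 (U x) (hU x hx), map_zero, sub_zero]
  · intro a ρaU hρaU s hs x hx
    have h1 : gammaBracket I (a • U) ρaU s x = ρaU (s x) - s ((a • U) x) := rfl
    obtain ⟨y, hy⟩ := Ideal.Quotient.mk_surjective (s x)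
    have h2 : (a • U) x = a * U x := rfl
    have h3 : Ideal.Quotient.mk I (U x) = 0 := (Ideal.Quotient.eq_zero_iff_mem).2 (hU x hx)
    have h4 : (a • U) y = a * U y := rfl
    rw [h1, hb, h2, hs a (U x), h3, mul_zero, zero_add, ← hy, hρaU y, h4, map_mul, hρU]
    ring
  · intro b s hs x hx
    have h1 : gammaBracket I U ρU ((LinearMap.mulLeft K (Ideal.Quotient.mk I b)) ∘ₗ s) x
        = ρU (Ideal.Quotient.mk I b * s x) - Ideal.Quotient.mk I b * s (U x) := rfl
    rw [h1, hb, mul_comm (Ideal.Quotient.mk I b) (s x), key]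
    ring
end

section
/- Let M be an orientable Poisson manifold with volume form W and modular vector field μ_W. Then μ_W is an infinitesimal automorphism of the Poisson bracket: μ_W({f,g}) = {μ_W(f), g} + {f, μ_W(g)} for all f, g ∈ C^∞(M). -/
/-- A Poisson bracket on the commutative algebra `A` (of smooth functions). -/
structure PoissonBracket (A : Type*) [CommRing A] [Algebra ℝ A] where
  b : A →ₗ[ℝ] A →ₗ[ℝ] A
  antisymm : ∀ f g, b f g = - b g f
  leibniz : ∀ f g h, b f (g * h) = b f g * h + g * b f h
  jacobi : ∀ f g h, b f (b g h) = b (b f g) h + b g (b f h)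

/-- Let `M` be an orientable Poisson manifold with volume form `W` and
modular vector field `μ_W` (`μ_W(f)·W = L_{X_f} W`).  Then `μ_W` is an infinitesimal
automorphism of the Poisson bracket:
`μ_W({f,g}) = {μ_W(f), g} + {f, μ_W(g)}` for all `f, g ∈ C^∞(M)`. -/
theorem stmt9 (A : Type*) [CommRing A] [Algebra ℝ A] (P : PoissonBracket A)
    (Ham : A → Derivation ℝ A A) (hHam : ∀ f g, Ham f g = P.b f g)
    (hHamBr : ∀ f g : A, Ham (P.b f g) = ⁅Ham f, Ham g⁆)   -- X_{{f,g}} = [X_f, X_g]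
    (Ω : Type*) [AddCommGroup Ω] [Module ℝ Ω] [Module A Ω]
    (W : Ω) (hW : ∀ a : A, a • W = 0 → a = 0)
    (L : Derivation ℝ A A → Ω → Ω)
    (hLmod : ∀ (X : Derivation ℝ A A) (a : A) (ω : Ω), L X (a • ω) = X a • ω + a • L X ω)
    (hLbr : ∀ (X Y : Derivation ℝ A A) (ω : Ω), L ⁅X, Y⁆ ω = L X (L Y ω) - L Y (L X ω))
    (μ : A → A) (hμ : ∀ f : A, L (Ham f) W = μ f • W) :
    ∀ f g : A, μ (P.b f g) = P.b (μ f) g + P.b f (μ g) := by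
  intro f g
  have key : μ (P.b f g) • W = (P.b (μ f) g + P.b f (μ g)) • W := by
    have h1 : μ (P.b f g) • W = L (Ham (P.b f g)) W := (hμ _).symm
    rw [h1, hHamBr, hLbr, hμ, hμ, hLmod, hLmod, hμ, hμ, hHam, hHam]
    have : P.b g (μ f) = - P.b (μ f) g := P.antisymm g (μ f)
    rw [this]
    module
  have := hW (μ (P.b f g) - (P.b (μ f) g + P.b f (μ g))) (by rw [sub_smul, key, sub_self])
  exact sub_eq_zero.mp this
end

section
/- Let M be an orientable Poisson manifold. There exists a volume form invariant under all Hamiltonian flows (L_{X_f}W' = 0 for all f) if and only if the modular class is trivial, i.e., the modular vector field μ_W of some (hence any) volume form W is Hamiltonian: μ_W = X_ψ for some ψ ∈ C^∞(M). In the 'if' direction, W' = exp(ψ)·W is Hamiltonian-invariant. -/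
/-- Let `M` be an orientable Poisson manifold with a volume form `W` and
modular vector field `μ_W`.  There exists a Hamiltonian-invariant volume form, i.e. a form
`W' = exp(ψ')·W` with `L_{X_f} W' = 0` for all `f` (a positive function is `ε = exp(ψ')`,
an invertible element satisfying the chain rule `X_f(ε) = ε·X_f(ψ')`), if and only if the
modular class is trivial: `μ_W = X_ψ` for some `ψ ∈ C^∞(M)`.  In the `if` direction,
`W' = exp(ψ)·W` is Hamiltonian-invariant. -/
theorem stmt10 (A : Type*) [CommRing A] [Algebra ℝ A] (P : PoissonBracket A)
    (Ham : A → Derivation ℝ A A) (hHam : ∀ f g, Ham f g = P.b f g)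
    (Ω : Type*) [AddCommGroup Ω] [Module ℝ Ω] [Module A Ω]
    (W : Ω) (hW : ∀ a : A, a • W = 0 → a = 0)
    (L : Derivation ℝ A A → Ω → Ω)
    (hLmod : ∀ (X : Derivation ℝ A A) (a : A) (ω : Ω), L X (a • ω) = X a • ω + a • L X ω)
    -- `C^∞(M)` admits exponentials: for every ψ there is `ε = exp ψ`
    (hexp : ∀ ψ : A, ∃ ε : A, IsUnit ε ∧ ∀ f : A, Ham f ε = ε * Ham f ψ)
    (μ : A → A) (hμ : ∀ f : A, L (Ham f) W = μ f • W) :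
    -- existence of an invariant volume form `exp(ψ')·W` ↔ triviality of the modular class
    ((∃ ψ' ε : A, IsUnit ε ∧ (∀ f : A, Ham f ε = ε * Ham f ψ') ∧
        ∀ f : A, L (Ham f) (ε • W) = 0)
      ↔ (∃ ψ : A, ∀ f : A, μ f = P.b ψ f)) ∧
    -- `if` direction: `exp(ψ)·W` is invariant under all Hamiltonian flows
    (∀ ψ ε : A, IsUnit ε → (∀ f : A, Ham f ε = ε * Ham f ψ) →
      (∀ f : A, μ f = P.b ψ f) → ∀ f : A, L (Ham f) (ε • W) = 0) := by
  have key : ∀ (ψ ε : A), (∀ f : A, Ham f ε = ε * Ham f ψ) →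
      ∀ f : A, L (Ham f) (ε • W) = (ε * (Ham f ψ + μ f)) • W := by
    intro ψ ε hch f
    rw [hLmod, hμ, hch, mul_add, add_smul, mul_smul, mul_smul]
  have ifdir : ∀ ψ ε : A, (∀ f : A, Ham f ε = ε * Ham f ψ) →
      (∀ f : A, μ f = P.b ψ f) → ∀ f : A, L (Ham f) (ε • W) = 0 := by
    intro ψ ε hch hψ f
    rw [key ψ ε hch f]
    have : Ham f ψ + μ f = 0 := by
      rw [hψ f, hHam, P.antisymm f ψ]; ring
    rw [this, mul_zero, zero_smul]
  refine ⟨⟨?_, ?_⟩, fun ψ ε _ hch hψ => ifdir ψ ε hch hψ⟩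
  · rintro ⟨ψ', ε, hε, hch, hinv⟩
    refine ⟨ψ', fun f => ?_⟩
    have h2 : ε * (Ham f ψ' + μ f) = 0 :=
      hW _ ((key ψ' ε hch f).symm.trans (hinv f))
    have h3 : Ham f ψ' + μ f = 0 := by
      rcases hε with ⟨u, rfl⟩
      exact (Units.mul_right_eq_zero u).mp h2
    have h4 : μ f = - Ham f ψ' := eq_neg_of_add_eq_zero_right
      (by linear_combination h3)
    rw [h4, hHam, P.antisymm, neg_neg]
  · rintro ⟨ψ, hψ⟩
    obtain ⟨ε, hε, hch⟩ := hexp ψ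
    exact ⟨ψ, ε, hε, hch, ifdir ψ ε hch hψ⟩
end

section
/- Let S be a 2-dimensional symplectic manifold, φ ∈ C^∞(S) with φ(x₀) = 0, and {·,·}₁ = φ·{·,·}. Then the Dirac distribution δ_{x₀} at x₀ belongs to the generalized center of (C^∞(S), {·,·}₁): ⟨{f, δ_{x₀}}₁, g⟩ = −φ(x₀)·{f,g}(x₀) = 0 for all f, g ∈ C^∞(S). Moreover, if v ∈ T_{x₀}S satisfies dφ(x₀)(v) = 0, then the derivative of the Dirac functional, δ'_{x₀}(v) : f ↦ −df(x₀)(v), also belongs to the generalized center, and δ_{x₀}, δ'_{x₀}(v) are linearly independent when v ≠ 0. -/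
/-- Let `S` be a 2-dimensional symplectic manifold with bracket `b`,
`φ ∈ C^∞(S)` with `φ(x₀) = 0` (evaluation character `ev` at `x₀`), and
`{·,·}₁ = φ·{·,·}`.  Then the Dirac distribution `δ_{x₀} = ev` lies in the generalized
center of `(C^∞(S), {·,·}₁)`: `⟨{f, δ_{x₀}}₁, g⟩ = −φ(x₀)·{f,g}(x₀) = 0`.  Moreover, if
`v ∈ T_{x₀}S` (a point derivation at `x₀`) satisfies `dφ(x₀)(v) = 0`, then the
derivative of the Dirac functional `δ'_{x₀}(v) = −v` also lies in the generalized
center, and `δ_{x₀}`, `δ'_{x₀}(v)` are linearly independent when `v ≠ 0`. -/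
theorem stmt14 (A : Type*) [CommRing A] [Algebra ℝ A]
    (b : A →ₗ[ℝ] A →ₗ[ℝ] A)                        -- the original symplectic bracket
    (ev : A →ₐ[ℝ] ℝ)                               -- Dirac distribution δ_{x₀}
    (φ : A) (hφ : ev φ = 0)                         -- φ(x₀) = 0
    (v : A →ₗ[ℝ] ℝ)
    (hv : ∀ a c : A, v (a * c) = v a * ev c + ev a * v c)  -- v ∈ T_{x₀}S
    (hvφ : v φ = 0) :                               -- dφ(x₀)(v) = 0
    -- δ_{x₀} is in the generalized center of {·,·}₁ = φ·{·,·}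
    (∀ f g : A, ev (φ * b f g) = 0) ∧
    -- δ'_{x₀}(v) = −v is in the generalized center of {·,·}₁
    (∀ f g : A, (-v) (φ * b f g) = 0) ∧
    -- δ_{x₀} and δ'_{x₀}(v) are linearly independent
    (v ≠ 0 → LinearIndependent ℝ ![ev.toLinearMap, -v]) := by
  refine ⟨fun f g => by simp [hφ], fun f g => by simp [hv, hφ, hvφ], fun hvne => ?_⟩
  rw [linearIndependent_fin2]
  constructor
  · simpa using hvne
  · intro a h
    have h1 := congrFun (congrArg DFunLike.coe h) 1
    have hv1 : v 1 = 0 := by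
      have := hv 1 1
      simp at this
      linarith
    simp [hv1] at h1
end

section
/- Let M be a Poisson manifold, N ⊆ M a compact closed symplectic leaf of dimension 2k, and X ∈ W(N) a derivation along N (X : C^∞(M) → C^∞(N) with X(fg) = X(f)·ρ(g) + ρ(f)·X(g), where ρ is restriction to N). Then X(δ_N) = 0 (where ⟨X(Φ), f⟩ = −⟨Φ, X(f)⟩) if and only if X is tangent to N (i.e., X(I_N) = 0 for the vanishing ideal I_N) and the flow of X on N preserves the Liouville volume: L_X(ω_N^k) = 0. -/
/-- Let `M` be a Poisson manifold and `N ⊆ M` a compact closed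
symplectic leaf of dimension `2k`, with restriction map `ρ : C^∞(M) → C^∞(N)`, Liouville
integration `I : g ↦ ∫_N g·ω_N^k` (a faithful functional), and divergence operator
`div` of vector fields on `N` w.r.t. `ω_N^k` (so `L_D(ω_N^k) = 0 ↔ div D = 0`, with
Stokes' theorem `∫_N (D g + g·div D)·ω_N^k = 0`).  For a derivation along `N`,
`X : C^∞(M) → C^∞(N)` with `X(fg) = X(f)ρ(g) + ρ(f)X(g)` (a section of `T(M)|_N`), one
has `X(δ_N) = 0` (i.e. `∫_N X(f)·ω_N^k = 0` for all `f`) iff `X` is tangent to `N`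
(`X(I_N) = 0`) and the flow of the induced field on `N` preserves the Liouville volume
(`div D = 0` for the descended derivation `D`). -/
theorem stmt17 (A B : Type*) [CommRing A] [Algebra ℝ A] [CommRing B] [Algebra ℝ B]
    (ρ : A →ₐ[ℝ] B) (hρ : Function.Surjective ρ)
    (I : Module.Dual ℝ B)                                  -- g ↦ ∫_N g·ω_N^k
    (hfaith : ∀ g : B, (∀ h : B, I (h * g) = 0) → g = 0)
    (div : Derivation ℝ B B → B)
    (hStokes : ∀ (D : Derivation ℝ B B) (g : B), I (D g + g * div D) = 0)
    (X : A →ₗ[ℝ] B)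
    (hX : ∀ f g : A, X (f * g) = X f * ρ g + ρ f * X g) :  -- X ∈ W(N)
    (∀ f : A, I (X f) = 0) ↔
      ((∀ f ∈ RingHom.ker ρ.toRingHom, X f = 0) ∧
        ∀ D : Derivation ℝ B B, (∀ a : A, D (ρ a) = X a) → div D = 0) := by
  constructor
  · intro h
    constructor
    · intro f hf
      have hf0 : ρ f = 0 := hf
      apply hfaith
      intro h'
      obtain ⟨g, rfl⟩ := hρ h'
      have hgf : X (g * f) = ρ g * X f := by rw [hX, hf0, mul_zero, zero_add]
      have := h (g * f)
      rwa [hgf] at this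
    · intro D hD
      apply hfaith
      intro h'
      obtain ⟨a, rfl⟩ := hρ h'
      have hst := hStokes D (ρ a)
      rw [hD a, map_add, h a, zero_add] at hst
      exact hst
  · rintro ⟨h1, h2⟩ f
    classical
    set s : B → A := Function.surjInv hρ with hsdef
    have hs : ∀ b : B, ρ (s b) = b := fun b => Function.surjInv_eq hρ b
    have wd : ∀ a : A, X (s (ρ a)) = X a := by
      intro a
      have hk : s (ρ a) - a ∈ RingHom.ker ρ.toRingHom := by
        have : ρ (s (ρ a) - a) = 0 := by rw [map_sub, hs, sub_self]
        exact this
      have := h1 _ hk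
      rw [map_sub, sub_eq_zero] at this
      exact this
    have X1 : X 1 = 0 := by
      have h11 := hX 1 1
      rw [mul_one, map_one ρ, mul_one, one_mul] at h11
      exact left_eq_add.mp h11
    let D : Derivation ℝ B B :=
      { toFun := fun b => X (s b)
        map_add' := by
          intro b c
          show X (s (b + c)) = X (s b) + X (s c)
          have key : X (s (b + c)) = X (s b + s c) := by
            have := wd (s b + s c); rwa [map_add, hs, hs] at this
          rw [key, map_add]
        map_smul' := by
          intro r b
          show X (s (r • b)) = (RingHom.id ℝ) r • X (s b)
          have key : X (s (r • b)) = X (r • s b) := by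
            have := wd (r • s b); rwa [map_smul, hs] at this
          rw [key, map_smul]; rfl
        map_one_eq_zero' := by
          show X (s 1) = 0
          have := wd 1
          rw [map_one] at this
          rw [this, X1]
        leibniz' := by
          intro b c
          show X (s (b * c)) = b • X (s c) + c • X (s b)
          have key : X (s (b * c)) = X (s b * s c) := by
            have := wd (s b * s c); rwa [map_mul, hs, hs] at this
          rw [key, hX, hs, hs, smul_eq_mul, smul_eq_mul]
          ring }
    have hD : ∀ a : A, D (ρ a) = X a := fun a => wd a
    have hdiv : div D = 0 := h2 D hD
    have hst := hStokes D (ρ f)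
    rw [hdiv, mul_zero, add_zero, hD f] at hst
    exact hst
end

section
/- Let M be a Poisson manifold, N a symplectic leaf, and U ∈ W(N) satisfying U({f,g}) = {U(f), ρ(g)} + {ρ(f), U(g)} for all f, g ∈ C^∞(M). Then the image π(U) of U in the space of sections of the transversal bundle V(N) = T(M)|_N / T(N) is flat with respect to the Bott connection: ∇_{df}(π(U)) = 0 for all f ∈ C^∞(M). In particular, Hamiltonian vector fields X_ψ (ψ ∈ C^∞(N)) satisfy the identity and map to the zero section. -/
/-- Let `M` be a Poisson manifold, `N` a symplectic leaf (restriction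
`ρ : C^∞(M) → C^∞(N)`, a surjective Poisson map), and `U ∈ W(N)` (a derivation along
`N`, i.e. a section of `T(M)|_N`) satisfying
`U({f,g}) = {U(f), ρ(g)} + {ρ(f), U(g)}`.  Then the image `π(U)` of `U` in the sections
of `V(N) = T(M)|_N / T(N)` is flat for the Bott connection: for every `f`,
`∇_{df}(π U) = π([X_f, U]|_N) = 0`, i.e. the section `a ↦ {ρ f, U a} − U({f, a})` kills
the vanishing ideal `I_N = ker ρ` (is tangent to `N`).  In particular, for `ψ ∈ C^∞(N)`
the Hamiltonian field `U_ψ = {ψ, ρ(·)}` lies in `W(N)`, satisfies the identity, and maps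
to the zero section of `V(N)`. -/
theorem stmt18 (A B : Type*) [CommRing A] [Algebra ℝ A] [CommRing B] [Algebra ℝ B]
    (bA : A →ₗ[ℝ] A →ₗ[ℝ] A) (bB : B →ₗ[ℝ] B →ₗ[ℝ] B)
    (hleibB : ∀ f g h : B, bB f (g * h) = bB f g * h + g * bB f h)
    (hjacB : ∀ f g h : B, bB f (bB g h) = bB (bB f g) h + bB g (bB f h))
    (ρ : A →ₐ[ℝ] B) (hρ : Function.Surjective ρ)
    (hPoisson : ∀ f g : A, ρ (bA f g) = bB (ρ f) (ρ g))
    (U : A →ₗ[ℝ] B)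
    (hUleib : ∀ f g : A, U (f * g) = U f * ρ g + ρ f * U g)       -- U ∈ W(N)
    (hU : ∀ f g : A, U (bA f g) = bB (U f) (ρ g) + bB (ρ f) (U g)) :
    -- π(U) is flat for the Bott connection: `[X_f, U]|_N` is tangent to `N`
    (∀ f : A, ∀ k ∈ RingHom.ker ρ.toRingHom, bB (ρ f) (U k) - U (bA f k) = 0) ∧
    -- Hamiltonian fields `U_ψ = {ψ, ρ(·)}` satisfy the identity and map to 0 in `V(N)`
    (∀ ψ : B,
      (∀ f g : A, bB ψ (ρ (f * g)) = bB ψ (ρ f) * ρ g + ρ f * bB ψ (ρ g)) ∧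
      (∀ f g : A, bB ψ (ρ (bA f g)) = bB (bB ψ (ρ f)) (ρ g) + bB (ρ f) (bB ψ (ρ g))) ∧
      (∀ k ∈ RingHom.ker ρ.toRingHom, bB ψ (ρ k) = 0)) := by
  constructor
  · intro f k hk
    have hk0 : ρ k = 0 := hk
    rw [hU f k, hk0, map_zero]
    ring
  · intro ψ
    refine ⟨fun f g => by rw [map_mul, hleibB], fun f g => by rw [hPoisson, hjacB],
      fun k hk => by rw [show ρ k = 0 from hk, map_zero]⟩
end
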